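/- arXiv:math/0701536 — 3 statements merged into one kernel-verified Lean document; each statement's English description precedes it below -/
import Mathlib

section
/- Let a, b1, b2 > 0 and x, y ∈ [0,1). Then the double series B(a,b1+b2)·Σ_{k,n≥0} (a)_{k+n}(b1)_k(b2)_n x^k y^n/((a+b1+b2)_{k+n} k! n!) converges absolutely and equals the convergent improper integral ∫_0^∞ t^{a−1}(1+t)^{−a} (1+(1−x)t)^{−b1} (1+(1−y)t)^{−b2} dt. -/
open Real MeasureTheory

/-- Rising factorial (Pochhammer symbol) `(a)_k`. -/
noncomputable def poch (a : ℝ) (k : ℕ) : ℝ := (ascPochhammer ℝ k).eval a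

/-- Euler beta function `B(p,q) = Γ(p)Γ(q)/Γ(p+q)`. -/
noncomputable def eulerBeta (p q : ℝ) : ℝ := Real.Gamma p * Real.Gamma q / Real.Gamma (p + q)

/-- Digamma function `ψ(x) = Γ'(x)/Γ(x)`. -/
noncomputable def psi (x : ℝ) : ℝ := deriv Real.Gamma x / Real.Gamma x

/-- General term of the double series for `B(a,b₁+b₂)·F₁(a;b₁,b₂;a+b₁+b₂;x,y)`. -/
noncomputable def F1term (a b1 b2 x y : ℝ) (p : ℕ × ℕ) : ℝ :=
  poch a (p.1 + p.2) * poch b1 p.1 * poch b2 p.2 * x ^ p.1 * y ^ p.2 /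
    (poch (a + b1 + b2) (p.1 + p.2) * (Nat.factorial p.1 : ℝ) * (Nat.factorial p.2 : ℝ))

/-- `f_{a,b₁,b₂}(x,y) = B(a,b₁+b₂)·F₁(a;b₁,b₂;a+b₁+b₂;x,y)` as a double series. -/
noncomputable def f (a b1 b2 x y : ℝ) : ℝ :=
  eulerBeta a (b1 + b2) * ∑' p : ℕ × ℕ, F1term a b1 b2 x y p

/-- The approximation `g_{a,b₁,b₂}(x,y)`. -/
noncomputable def g (a b1 b2 x y : ℝ) : ℝ :=
  Real.log (1 / (1 - x)) + 2 * psi 1 - psi a - psi (b1 + b2) +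
    ∑' k : ℕ, poch b2 (k + 1) / ((k + 1 : ℝ) * poch (b1 + b2) (k + 1)) *
      ((y - x) / (1 - x)) ^ (k + 1)

/-! Since `1 + (1 - x) t = (1 + t)(1 - x s)` with `s = t / (1 + t) ∈ [0, 1)`, the
integrand is `t^(a-1) (1+t)^(-(a+b₁+b₂)) (1 - x s)^(-b₁) (1 - y s)^(-b₂)`. Expanding the
last two factors in binomial series writes it as a double series of nonnegative functions
whose `(k, n)` term is
`(b₁)_k (b₂)_n x^k y^n / (k! n!) · t^(a+k+n-1) (1+t)^(-(a+k+n+b₁+b₂))`.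
By the beta integral `∫₀^∞ t^(p-1) (1+t)^(-(p+q)) dt = B(p, q)` and `Γ(p + m) = (p)_m Γ(p)`,
this term integrates to `B(a, b₁+b₂)` times the `(k, n)` term of `F₁`, and the double series
of these integrals converges because `(a)_m ≤ (a+b₁+b₂)_m`. Integrating termwise gives the
identity; the integral is then positive, so the integrand is integrable. -/

open Set

lemma poch_succ (b : ℝ) (k : ℕ) : poch b (k + 1) = poch b k * (b + k) :=
  ascPochhammer_succ_eval k b

lemma poch_pos {b : ℝ} (hb : 0 < b) (k : ℕ) : 0 < poch b k :=
  ascPochhammer_pos k b hb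

lemma poch_le_poch {b c : ℝ} (hb : 0 < b) (hbc : b ≤ c) (k : ℕ) : poch b k ≤ poch c k := by
  induction k with
  | zero => simp [poch]
  | succ k ih =>
    rw [poch_succ, poch_succ]
    exact mul_le_mul ih (by linarith) (by positivity) (poch_pos (hb.trans_le hbc) k).le

lemma Gamma_add_nat_eq_poch_mul {b : ℝ} (hb : 0 < b) (k : ℕ) :
    Gamma (b + k) = poch b k * Gamma b := by
  induction k with
  | zero => simp [poch]
  | succ k ih =>
    rw [Nat.cast_succ, ← add_assoc, Real.Gamma_add_one (by positivity), ih, poch_succ]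
    ring

lemma ring_choose_eq_poch_div_factorial (b : ℝ) (n : ℕ) :
    Ring.choose (b + n - 1) n = poch b n / n.factorial := by
  rw [← Ring.multichoose_eq, poch, eq_div_iff (by positivity), mul_comm,
    ← nsmul_eq_mul, Ring.factorial_nsmul_multichoose_eq_ascPochhammer,
    Polynomial.ascPochhammer_smeval_eq_eval]

theorem hasSum_poch_mul_pow_div_factorial (b : ℝ) {z : ℝ} (hz : |z| < 1) :
    HasSum (fun n : ℕ => poch b n * z ^ n / n.factorial) ((1 - z) ^ (-b)) := by
  have h := (Real.one_div_one_sub_rpow_hasFPowerSeriesOnBall_zero b).hasSum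
    (y := z) (by simpa [enorm_eq_nnnorm, ← NNReal.coe_lt_one] using hz)
  simp only [FormalMultilinearSeries.ofScalars_apply_eq, ring_choose_eq_poch_div_factorial,
    zero_add, smul_eq_mul, one_div, div_mul_eq_mul_div] at h
  rwa [Real.rpow_neg (by linarith [le_abs_self z])]

theorem hasSum_poch_mul_poch {b₁ b₂ X Y : ℝ} (hb₁ : 0 < b₁) (hb₂ : 0 < b₂)
    (hX₀ : 0 ≤ X) (hX₁ : X < 1) (hY₀ : 0 ≤ Y) (hY₁ : Y < 1) :
    HasSum (fun p : ℕ × ℕ => poch b₁ p.1 * X ^ p.1 / p.1.factorial *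
        (poch b₂ p.2 * Y ^ p.2 / p.2.factorial)) ((1 - X) ^ (-b₁) * (1 - Y) ^ (-b₂)) := by
  have hX := hasSum_poch_mul_pow_div_factorial b₁ (abs_lt.2 ⟨by linarith, hX₁⟩)
  have hY := hasSum_poch_mul_pow_div_factorial b₂ (abs_lt.2 ⟨by linarith, hY₁⟩)
  refine hX.mul hY (hX.summable.mul_of_nonneg hY.summable (fun k => ?_) (fun n => ?_))
  · have := poch_pos hb₁ k; positivity
  · have := poch_pos hb₂ n; positivity

lemma eulerBeta_pos {p q : ℝ} (hp : 0 < p) (hq : 0 < q) : 0 < eulerBeta p q := by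
  unfold eulerBeta
  have := Real.Gamma_pos_of_pos hp
  have := Real.Gamma_pos_of_pos hq
  have := Real.Gamma_pos_of_pos (add_pos hp hq)
  positivity

lemma eulerBeta_add_nat {p q : ℝ} (hp : 0 < p) (hq : 0 < q) (m : ℕ) :
    eulerBeta (p + m) q = poch p m / poch (p + q) m * eulerBeta p q := by
  have hpq : 0 < p + q := add_pos hp hq
  have := (Real.Gamma_pos_of_pos hpq).ne'
  have := (poch_pos hpq m).ne'
  rw [eulerBeta, eulerBeta, add_right_comm, Gamma_add_nat_eq_poch_mul hp,
    Gamma_add_nat_eq_poch_mul hpq]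
  field_simp

lemma integral_Ioo_rpow_mul_one_sub_rpow {p q : ℝ} (hp : 0 < p) (hq : 0 < q) :
    ∫ u in Ioo (0 : ℝ) 1, u ^ (p - 1) * (1 - u) ^ (q - 1) = eulerBeta p q := by
  have hC := Complex.Gamma_mul_Gamma_eq_betaIntegral
    (s := (p : ℂ)) (t := (q : ℂ)) (by simpa using hp) (by simpa using hq)
  have hβ : Complex.betaIntegral p q =
      ((∫ u in (0 : ℝ)..1, u ^ (p - 1) * (1 - u) ^ (q - 1) : ℝ) : ℂ) := by
    rw [Complex.betaIntegral, ← intervalIntegral.integral_ofReal]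
    refine intervalIntegral.integral_congr fun u hu => ?_
    rw [uIcc_of_le zero_le_one] at hu
    have h1u : 0 ≤ 1 - u := by linarith [hu.2]
    simp [Complex.ofReal_cpow hu.1, Complex.ofReal_cpow h1u]
  rw [hβ, ← Complex.ofReal_add, Complex.Gamma_ofReal, Complex.Gamma_ofReal,
    Complex.Gamma_ofReal] at hC
  have hR : Gamma p * Gamma q =
      Gamma (p + q) * ∫ u in Ioo (0 : ℝ) 1, u ^ (p - 1) * (1 - u) ^ (q - 1) := by
    rw [← integral_Ioc_eq_integral_Ioo, ← intervalIntegral.integral_of_le zero_le_one]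
    exact_mod_cast hC
  rw [eulerBeta, hR, mul_div_cancel_left₀ _ (Real.Gamma_pos_of_pos (add_pos hp hq)).ne']

lemma image_div_one_sub_Ioo : (fun u : ℝ => u / (1 - u)) '' Ioo 0 1 = Ioi 0 := by
  ext t
  constructor
  · rintro ⟨u, ⟨hu₀, hu₁⟩, rfl⟩
    exact div_pos hu₀ (sub_pos.2 hu₁)
  · intro (ht : 0 < t)
    refine ⟨t / (1 + t), ⟨by positivity, (div_lt_one (by positivity)).2 (by linarith)⟩, ?_⟩
    field_simp
    ring

lemma integral_Ioi_rpow_mul_one_add_rpow {p q : ℝ} (hp : 0 < p) (hq : 0 < q) :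
    ∫ t in Ioi (0 : ℝ), t ^ (p - 1) * (1 + t) ^ (-(p + q)) = eulerBeta p q := by
  have hderiv : ∀ u ∈ Ioo (0 : ℝ) 1,
      HasDerivWithinAt (fun u : ℝ => u / (1 - u)) ((1 - u) ^ (-2 : ℝ)) (Ioo 0 1) u := by
    intro u ⟨_, hu₁⟩
    have h1u : 1 - u ≠ 0 := by linarith
    refine (((hasDerivAt_id u).fun_div ((hasDerivAt_id u).const_sub 1) h1u).congr_deriv
      ?_).hasDerivWithinAt
    rw [id, Real.rpow_neg (by linarith), Real.rpow_two]
    field_simp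
    ring
  have hinj : InjOn (fun u : ℝ => u / (1 - u)) (Ioo 0 1) := by
    intro u ⟨_, hu₁⟩ v ⟨_, hv₁⟩ huv
    rw [div_eq_div_iff (by linarith) (by linarith)] at huv
    linarith
  rw [← image_div_one_sub_Ioo,
    integral_image_eq_integral_abs_deriv_smul measurableSet_Ioo hderiv hinj,
    ← integral_Ioo_rpow_mul_one_sub_rpow hp hq]
  refine setIntegral_congr_fun measurableSet_Ioo fun u ⟨hu₀, hu₁⟩ => ?_
  have h1u : 0 < 1 - u := by linarith
  have h : 1 + u / (1 - u) = (1 - u)⁻¹ := by field_simp; ring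
  rw [smul_eq_mul, abs_of_pos (by positivity), h, Real.div_rpow hu₀.le h1u.le,
    Real.inv_rpow h1u.le, ← Real.rpow_neg h1u.le, neg_neg, div_eq_mul_inv,
    ← Real.rpow_neg h1u.le]
  calc (1 - u) ^ (-2 : ℝ) * (u ^ (p - 1) * (1 - u) ^ (-(p - 1)) * (1 - u) ^ (p + q))
      = u ^ (p - 1) * ((1 - u) ^ (-2 : ℝ) * (1 - u) ^ (-(p - 1)) * (1 - u) ^ (p + q)) := by ring
    _ = u ^ (p - 1) * (1 - u) ^ (q - 1) := by
      rw [← Real.rpow_add h1u, ← Real.rpow_add h1u]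
      ring_nf

lemma integrableOn_Ioi_rpow_mul_one_add_rpow {p q : ℝ} (hp : 0 < p) (hq : 0 < q) :
    IntegrableOn (fun t : ℝ => t ^ (p - 1) * (1 + t) ^ (-(p + q))) (Ioi 0) :=
  .of_integral_ne_zero <| by
    rw [integral_Ioi_rpow_mul_one_add_rpow hp hq]
    exact (eulerBeta_pos hp hq).ne'

theorem hasSum_setIntegral_of_nonneg {α ι : Type*} [MeasurableSpace α] [Countable ι]
    {μ : Measure α} {s : Set α} {F : ι → α → ℝ} {G : α → ℝ} (hs : MeasurableSet s)
    (hF₀ : ∀ i, ∀ t ∈ s, 0 ≤ F i t) (hF : ∀ i, IntegrableOn (F i) s μ)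
    (hsum : Summable fun i => ∫ t in s, F i t ∂μ) (hG : ∀ t ∈ s, HasSum (F · t) (G t)) :
    HasSum (fun i => ∫ t in s, F i t ∂μ) (∫ t in s, G t ∂μ) := by
  have h := hasSum_integral_of_summable_integral_norm hF <| hsum.congr fun i =>
    setIntegral_congr_fun hs fun t ht => (Real.norm_of_nonneg (hF₀ i t ht)).symm
  rwa [setIntegral_congr_fun hs fun t ht => (hG t ht).tsum_eq] at h

lemma rpow_add_nat_mul_one_add_rpow {t : ℝ} (ht : 0 < t) (p q : ℝ) (m : ℕ) :
    t ^ (p + m - 1) * (1 + t) ^ (-(p + m + q)) =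
      t ^ (p - 1) * (1 + t) ^ (-(p + q)) * (t / (1 + t)) ^ m := by
  have h1t : 0 < 1 + t := by linarith
  rw [show p + m - 1 = p - 1 + m by ring, show -(p + m + q) = -(p + q) - m by ring,
    Real.rpow_add ht, Real.rpow_sub h1t, Real.rpow_natCast, Real.rpow_natCast, div_pow]
  ring

lemma one_add_one_sub_mul_rpow_neg {t x : ℝ} (ht : 0 ≤ t) (hx : x ≤ 1) (b : ℝ) :
    (1 + (1 - x) * t) ^ (-b) = (1 + t) ^ (-b) * (1 - x * (t / (1 + t))) ^ (-b) := by
  have h1t : 0 < 1 + t := by linarith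
  have h : 1 - x * (t / (1 + t)) = (1 + (1 - x) * t) / (1 + t) := by field_simp; ring
  have h₀ : 0 ≤ (1 + (1 - x) * t) / (1 + t) := by
    have : 0 ≤ (1 - x) * t := mul_nonneg (by linarith) ht
    positivity
  rw [h, ← Real.mul_rpow h1t.le h₀, mul_div_cancel₀ _ h1t.ne']

section Appell

variable {a b1 b2 x y : ℝ}

noncomputable def F1termIntegrand (a b1 b2 x y : ℝ) (p : ℕ × ℕ) (t : ℝ) : ℝ :=
  poch b1 p.1 * x ^ p.1 / p.1.factorial * (poch b2 p.2 * y ^ p.2 / p.2.factorial) *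
    (t ^ (a + (p.1 + p.2 : ℕ) - 1) * (1 + t) ^ (-(a + (p.1 + p.2 : ℕ) + (b1 + b2))))

lemma F1term_eq (a b1 b2 x y : ℝ) (p : ℕ × ℕ) :
    F1term a b1 b2 x y p = poch a (p.1 + p.2) / poch (a + b1 + b2) (p.1 + p.2) *
      (poch b1 p.1 * x ^ p.1 / p.1.factorial * (poch b2 p.2 * y ^ p.2 / p.2.factorial)) := by
  rw [F1term]
  ring

lemma F1term_nonneg (ha : 0 < a) (hb1 : 0 < b1) (hb2 : 0 < b2) (hx : 0 ≤ x) (hy : 0 ≤ y)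
    (p : ℕ × ℕ) : 0 ≤ F1term a b1 b2 x y p := by
  have := poch_pos ha (p.1 + p.2)
  have := poch_pos (by positivity : 0 < a + b1 + b2) (p.1 + p.2)
  have := poch_pos hb1 p.1
  have := poch_pos hb2 p.2
  unfold F1term
  positivity

lemma F1term_le (ha : 0 < a) (hb1 : 0 < b1) (hb2 : 0 < b2) (hx : 0 ≤ x) (hy : 0 ≤ y)
    (p : ℕ × ℕ) : F1term a b1 b2 x y p ≤
      poch b1 p.1 * x ^ p.1 / p.1.factorial * (poch b2 p.2 * y ^ p.2 / p.2.factorial) := by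
  have := poch_pos hb1 p.1
  have := poch_pos hb2 p.2
  rw [F1term_eq]
  refine mul_le_of_le_one_left (by positivity) ((div_le_one (poch_pos (by positivity) _)).2 ?_)
  exact poch_le_poch ha (by linarith) _

lemma summable_F1term (ha : 0 < a) (hb1 : 0 < b1) (hb2 : 0 < b2) (hx0 : 0 ≤ x) (hx1 : x < 1)
    (hy0 : 0 ≤ y) (hy1 : y < 1) : Summable (F1term a b1 b2 x y) :=
  (hasSum_poch_mul_poch hb1 hb2 hx0 hx1 hy0 hy1).summable.of_nonneg_of_le
    (F1term_nonneg ha hb1 hb2 hx0 hy0) (F1term_le ha hb1 hb2 hx0 hy0)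

lemma F1termIntegrand_nonneg (hb1 : 0 < b1) (hb2 : 0 < b2) (hx : 0 ≤ x) (hy : 0 ≤ y)
    (p : ℕ × ℕ) {t : ℝ} (ht : 0 < t) : 0 ≤ F1termIntegrand a b1 b2 x y p t := by
  have := poch_pos hb1 p.1
  have := poch_pos hb2 p.2
  unfold F1termIntegrand
  positivity

lemma integral_F1termIntegrand (ha : 0 < a) (hb1 : 0 < b1) (hb2 : 0 < b2) (p : ℕ × ℕ) :
    ∫ t in Ioi 0, F1termIntegrand a b1 b2 x y p t =
      eulerBeta a (b1 + b2) * F1term a b1 b2 x y p := by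
  have hq : 0 < b1 + b2 := add_pos hb1 hb2
  simp only [F1termIntegrand]
  rw [integral_const_mul, integral_Ioi_rpow_mul_one_add_rpow (by positivity) hq,
    eulerBeta_add_nat ha hq, F1term_eq, add_assoc a]
  ring

lemma hasSum_F1termIntegrand (hb1 : 0 < b1) (hb2 : 0 < b2) (hx0 : 0 ≤ x) (hx1 : x < 1)
    (hy0 : 0 ≤ y) (hy1 : y < 1) {t : ℝ} (ht : 0 < t) :
    HasSum (fun p => F1termIntegrand a b1 b2 x y p t) (t ^ (a - 1) * (1 + t) ^ (-a) *
      (1 + (1 - x) * t) ^ (-b1) * (1 + (1 - y) * t) ^ (-b2)) := by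
  have h1t : 0 < 1 + t := by linarith
  set s := t / (1 + t)
  have hs₀ : 0 ≤ s := by positivity
  have hs₁ : s < 1 := (div_lt_one h1t).2 (by linarith)
  have h := (hasSum_poch_mul_poch hb1 hb2 (mul_nonneg hx0 hs₀) (by nlinarith)
    (mul_nonneg hy0 hs₀) (by nlinarith)).mul_left (t ^ (a - 1) * (1 + t) ^ (-(a + (b1 + b2))))
  have hvalue : t ^ (a - 1) * (1 + t) ^ (-a) * (1 + (1 - x) * t) ^ (-b1) *
      (1 + (1 - y) * t) ^ (-b2) =
        t ^ (a - 1) * (1 + t) ^ (-(a + (b1 + b2))) *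
          ((1 - x * s) ^ (-b1) * (1 - y * s) ^ (-b2)) := by
    rw [one_add_one_sub_mul_rpow_neg ht.le hx1.le, one_add_one_sub_mul_rpow_neg ht.le hy1.le,
      neg_add, neg_add, Real.rpow_add h1t, Real.rpow_add h1t]
    ring
  rw [hvalue]
  refine h.congr_fun fun p => ?_
  rw [F1termIntegrand, rpow_add_nat_mul_one_add_rpow ht, pow_add, mul_pow, mul_pow]
  ring

end Appell

/-- For `a, b₁, b₂ > 0` and `x, y ∈ [0,1)`, the double series defining
`B(a,b₁+b₂)·F₁(a;b₁,b₂;a+b₁+b₂;x,y)` converges absolutely and equals the convergent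
improper integral `∫₀^∞ t^{a-1}(1+t)^{-a}(1+(1-x)t)^{-b₁}(1+(1-y)t)^{-b₂} dt`. -/
theorem appell_series_eq_integral (a b1 b2 x y : ℝ)
    (ha : 0 < a) (hb1 : 0 < b1) (hb2 : 0 < b2)
    (hx0 : 0 ≤ x) (hx1 : x < 1) (hy0 : 0 ≤ y) (hy1 : y < 1) :
    Summable (fun p : ℕ × ℕ => |eulerBeta a (b1 + b2) * F1term a b1 b2 x y p|) ∧
    IntegrableOn
      (fun t : ℝ => t ^ (a - 1) * (1 + t) ^ (-a) *
        (1 + (1 - x) * t) ^ (-b1) * (1 + (1 - y) * t) ^ (-b2)) (Set.Ioi 0) ∧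
    eulerBeta a (b1 + b2) * ∑' p : ℕ × ℕ, F1term a b1 b2 x y p =
      ∫ t in Set.Ioi (0 : ℝ),
        t ^ (a - 1) * (1 + t) ^ (-a) *
          (1 + (1 - x) * t) ^ (-b1) * (1 + (1 - y) * t) ^ (-b2) := by
  have hB : 0 < eulerBeta a (b1 + b2) := eulerBeta_pos ha (add_pos hb1 hb2)
  have hsum : Summable fun p => eulerBeta a (b1 + b2) * F1term a b1 b2 x y p :=
    (summable_F1term ha hb1 hb2 hx0 hx1 hy0 hy1).mul_left _
  have key := hasSum_setIntegral_of_nonneg (μ := volume) (F := F1termIntegrand a b1 b2 x y)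
    measurableSet_Ioi (fun p t ht => F1termIntegrand_nonneg hb1 hb2 hx0 hy0 p ht)
    (fun p => (integrableOn_Ioi_rpow_mul_one_add_rpow (by positivity)
      (add_pos hb1 hb2)).const_mul _)
    (by simpa only [integral_F1termIntegrand ha hb1 hb2] using hsum)
    (fun t ht => hasSum_F1termIntegrand hb1 hb2 hx0 hx1 hy0 hy1 ht)
  simp only [integral_F1termIntegrand ha hb1 hb2] at key
  have hpos : 0 < ∫ t in Ioi (0 : ℝ), t ^ (a - 1) * (1 + t) ^ (-a) *
      (1 + (1 - x) * t) ^ (-b1) * (1 + (1 - y) * t) ^ (-b2) := by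
    refine hB.trans_le ?_
    simpa [F1term, poch] using le_hasSum key (0, 0) fun p _ =>
      mul_nonneg hB.le (F1term_nonneg ha hb1 hb2 hx0 hy0 p)
  refine ⟨hsum.abs, .of_integral_ne_zero hpos.ne', ?_⟩
  rw [← tsum_mul_left]
  exact key.tsum_eq
end

section
/- Let a > 0, t > 0 and let n ≥ 1 be an integer. Then t^{a−1}(1+t)^{−a} − Σ_{k=0}^{n−1} (−1)^k (a)_k/(k!·t^{k+1}) = ((−1)^n (a)_n/(t^{n+1}·(n−1)!))·∫_0^1 (1−s)^{n−1}(1+s/t)^{−(n+a)} ds. In particular, this quantity has sign (−1)^n. -/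
open Real

/-! Since `t ^ (a - 1) * (1 + t) ^ (-a) = t⁻¹ * (1 + t⁻¹) ^ (-a)` and the `k`-th derivative of
`x ↦ x ^ (-a)` at `1` is `(-1) ^ k (a)_k`, the sum is `t⁻¹` times the Taylor polynomial of degree
`n - 1` of `x ↦ x ^ (-a)` at `1`, evaluated at `1 + t⁻¹`. The difference is then `t⁻¹` times the
Taylor remainder in integral form along the segment `s ↦ 1 + s / t`, which is the stated integral.
Its integrand is positive, so the difference has the sign `(-1) ^ n` of its prefactor. -/

open Nat

theorem descPochhammer_eval_neg {R : Type*} [CommRing R] (r : R) (k : ℕ) :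
    (descPochhammer R k).eval (-r) = (-1) ^ k * (ascPochhammer R k).eval r := by
  rw [← neg_neg r, ascPochhammer_eval_neg_eq_descPochhammer, neg_neg, ← mul_assoc, ← mul_pow,
    neg_one_mul, neg_neg, one_pow, one_mul]

theorem iteratedFDeriv_rpow_const_apply (r x y : ℝ) (k : ℕ) :
    iteratedFDeriv ℝ k (fun x : ℝ => x ^ r) x (fun _ => y) =
      y ^ k * ((descPochhammer ℝ k).eval r * x ^ (r - k)) := by
  rw [iteratedFDeriv_apply_eq_iteratedDeriv_mul_prod, iteratedDeriv_eq_iterate,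
    iter_deriv_rpow_const, Finset.prod_const, Finset.card_univ, Fintype.card_fin, smul_eq_mul]

theorem rpow_add_eq_sum_add_integral {x y : ℝ} (hx : 0 < x) (hxy : 0 < x + y) (r : ℝ) (n : ℕ) :
    (x + y) ^ r = ∑ k ∈ Finset.range (n + 1),
        y ^ k * (descPochhammer ℝ k).eval r * x ^ (r - k) / k ! +
      y ^ (n + 1) * (descPochhammer ℝ (n + 1)).eval r / n ! *
        ∫ s in (0 : ℝ)..1, (1 - s) ^ n * (x + s * y) ^ (r - (n + 1 : ℕ)) := by
  have hsegment : ∀ s ∈ Set.Icc (0 : ℝ) 1, ContDiffAt ℝ (n + 1) (fun x : ℝ => x ^ r) (x + s • y) :=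
    fun s hs => contDiffAt_rpow_const_of_ne ((convex_Ioi 0).add_smul_mem hx hxy hs).ne'
  rw [map_add_eq_sum_add_integral_iteratedFDeriv hsegment]
  simp only [iteratedFDeriv_rpow_const_apply, smul_eq_mul]
  congr 1
  · exact Finset.sum_congr rfl fun k _ => by field_simp
  · rw [← intervalIntegral.integral_const_mul, ← intervalIntegral.integral_const_mul]
    exact intervalIntegral.integral_congr fun s _ => by ring

theorem rpow_sub_one_mul_one_add_rpow_neg {t : ℝ} (ht : 0 < t) (a : ℝ) :
    t ^ (a - 1) * (1 + t) ^ (-a) = t⁻¹ * (1 + t⁻¹) ^ (-a) := by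
  have h : 1 + t⁻¹ = (1 + t) * t⁻¹ := by field_simp; ring
  rw [h, mul_rpow (by positivity) (by positivity), inv_rpow ht.le, rpow_neg ht.le, inv_inv,
    rpow_sub ht, rpow_one]
  ring

theorem integral_one_sub_pow_mul_one_add_div_rpow_pos {t : ℝ} (ht : 0 < t) (m : ℕ) (c : ℝ) :
    0 < ∫ s in (0 : ℝ)..1, (1 - s) ^ m * (1 + s / t) ^ c := by
  have hbase : ∀ s : ℝ, 0 ≤ s → 0 < 1 + s / t := fun s hs => by positivity
  refine intervalIntegral.intervalIntegral_pos_of_pos_on ?_ (fun s hs => ?_) zero_lt_one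
  · refine ContinuousOn.intervalIntegrable ?_
    rw [Set.uIcc_of_le zero_le_one]
    have : ContinuousOn (fun s : ℝ => (1 + s / t) ^ c) (Set.Icc 0 1) :=
      ContinuousOn.rpow_const (by fun_prop) fun s hs => Or.inl (hbase s hs.1).ne'
    fun_prop
  · exact mul_pos (pow_pos (by linarith [hs.2]) m) (rpow_pos_of_pos (hbase s hs.1.le) c)

theorem rpow_sub_one_mul_one_add_rpow_neg_sub_sum {t : ℝ} (ht : 0 < t) (a : ℝ) {n : ℕ}
    (hn : 1 ≤ n) :
    t ^ (a - 1) * (1 + t) ^ (-a) -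
        ∑ k ∈ Finset.range n, (-1 : ℝ) ^ k * poch a k / ((k ! : ℝ) * t ^ (k + 1)) =
      ((-1 : ℝ) ^ n * poch a n / (t ^ (n + 1) * ((n - 1) ! : ℝ))) *
        ∫ s in (0 : ℝ)..1, (1 - s) ^ (n - 1) * (1 + s / t) ^ (-((n : ℝ) + a)) := by
  obtain ⟨m, rfl⟩ := Nat.exists_eq_add_of_le' hn
  have hintegrand : (fun s : ℝ => (1 - s) ^ m * (1 + s * t⁻¹) ^ (-a - ((m + 1 : ℕ) : ℝ))) =
      fun s => (1 - s) ^ (m + 1 - 1) * (1 + s / t) ^ (-(((m + 1 : ℕ) : ℝ) + a)) := by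
    ext s
    simp only [Nat.add_sub_cancel, div_eq_mul_inv]
    ring_nf
  rw [rpow_sub_one_mul_one_add_rpow_neg ht,
    rpow_add_eq_sum_add_integral one_pos (by positivity) (-a) m, ← hintegrand]
  set I := ∫ s in (0 : ℝ)..1, (1 - s) ^ m * (1 + s * t⁻¹) ^ (-a - ((m + 1 : ℕ) : ℝ))
  simp only [one_rpow, mul_one, descPochhammer_eval_neg, poch, inv_pow, Nat.add_sub_cancel,
    mul_add, Finset.mul_sum]
  rw [add_sub_right_comm, ← Finset.sum_sub_distrib, Finset.sum_eq_zero fun k _ => ?_, zero_add]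
  · field_simp
    ring
  · field_simp
    ring

/-- integral representation for the tail of the asymptotic expansion of
`t^{a-1}(1+t)^{-a}` and its sign. -/
theorem f_tail_integral (a t : ℝ) (n : ℕ) (ha : 0 < a) (ht : 0 < t) (hn : 1 ≤ n) :
    t ^ (a - 1) * (1 + t) ^ (-a) -
        ∑ k ∈ Finset.range n, (-1 : ℝ) ^ k * poch a k / ((Nat.factorial k : ℝ) * t ^ (k + 1)) =
      ((-1 : ℝ) ^ n * poch a n / (t ^ (n + 1) * (Nat.factorial (n - 1) : ℝ))) *
        ∫ s in (0 : ℝ)..1, (1 - s) ^ (n - 1) * (1 + s / t) ^ (-((n : ℝ) + a)) ∧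
    0 < (-1 : ℝ) ^ n *
      (t ^ (a - 1) * (1 + t) ^ (-a) -
        ∑ k ∈ Finset.range n, (-1 : ℝ) ^ k * poch a k / ((Nat.factorial k : ℝ) * t ^ (k + 1))) := by
  have htail := rpow_sub_one_mul_one_add_rpow_neg_sub_sum ht a hn
  refine ⟨htail, ?_⟩
  rw [htail, ← mul_assoc, mul_div_assoc', ← mul_assoc, ← pow_add, Even.neg_one_pow ⟨n, rfl⟩,
    one_mul]
  exact mul_pos (div_pos (ascPochhammer_pos n a ha) (by positivity))
    (integral_one_sub_pow_mul_one_add_div_rpow_pos ht _ _)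
end

section
/- For every real z with 0 < z ≤ 1, the series Σ_{k=0}^∞ (3/2)_k z^k/((k+1)·(k+1)!) converges and Σ_{k=0}^∞ (3/2)_k z^k/((k+1)·(k+1)!) = −(4/z)·ln((1 + √(1−z))/2). (This is the reduction formula ₃F₂(1,1,3/2; 2,2; z) = −(4/z)ln(1/2 + √(1−z)/2).) -/
open Real

/-!
Since `(3/2)ₖ = 2 (1/2)ₖ₊₁`, the series is `(2/z) ∑_{n ≥ 1} cₙ zⁿ / n`, where `cₙ = (1/2)ₙ / n!`
are the Taylor coefficients of `(1 - z)^(-1/2)`. Differentiating termwise, `∑ cₙ zⁿ / n` has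
derivative `((1 - z)^(-1/2) - 1) / z = 1 / (√(1 - z) (1 + √(1 - z)))`, which is also the derivative
of `-2 log ((1 + √(1 - z)) / 2)`, and both vanish at `0`. At `z = 1` the series still converges,
since `cₙ / n ≤ 2 (cₙ₋₁ - cₙ)` telescopes, and uniform convergence on `[0, 1]` carries the identity
to the endpoint.
-/

open Set
open scoped Nat

lemma poch_succ_right (a : ℝ) (k : ℕ) : poch a (k + 1) = poch a k * (a + k) :=
  ascPochhammer_succ_eval k a

lemma poch_succ_left (a : ℝ) (k : ℕ) : poch a (k + 1) = a * poch (a + 1) k := by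
  simp [poch, ascPochhammer_succ_left]

lemma choose_add_sub_one_eq_poch_div_factorial (a : ℝ) (n : ℕ) :
    Ring.choose (a + n - 1) n = poch a n / n ! := by
  rw [Ring.choose_eq_smul, Polynomial.descPochhammer_smeval_eq_ascPochhammer,
    Polynomial.ascPochhammer_smeval_eq_eval, smul_eq_mul, inv_mul_eq_div, poch,
    show a + n - 1 - n + 1 = a by ring]

/-- `(1/2)_n / n! = C(2n, n) / 4ⁿ`, the Taylor coefficients of `(1 - x)^(-1/2)`. -/
noncomputable def invSqrtCoeff (n : ℕ) : ℝ := poch (1 / 2) n / n !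

lemma invSqrtCoeff_zero : invSqrtCoeff 0 = 1 := by
  simp [invSqrtCoeff, poch]

lemma invSqrtCoeff_pos (n : ℕ) : 0 < invSqrtCoeff n :=
  div_pos (ascPochhammer_pos n _ one_half_pos) (by positivity)

lemma invSqrtCoeff_succ_mul (n : ℕ) :
    invSqrtCoeff (n + 1) * (n + 1) = invSqrtCoeff n * (n + 1 / 2) := by
  simp only [invSqrtCoeff, poch_succ_right, Nat.factorial_succ, Nat.cast_mul, Nat.cast_succ]
  field_simp
  ring

lemma invSqrtCoeff_succ_le (n : ℕ) : invSqrtCoeff (n + 1) ≤ invSqrtCoeff n := by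
  nlinarith [invSqrtCoeff_succ_mul n, invSqrtCoeff_pos n, invSqrtCoeff_pos (n + 1)]

lemma abs_invSqrtCoeff_le_one (n : ℕ) : |invSqrtCoeff n| ≤ 1 := by
  rw [abs_of_pos (invSqrtCoeff_pos n), ← invSqrtCoeff_zero]
  exact antitone_nat_of_succ_le invSqrtCoeff_succ_le n.zero_le

lemma invSqrtCoeff_succ_div_le (n : ℕ) :
    invSqrtCoeff (n + 1) / (n + 1) ≤ 2 * (invSqrtCoeff n - invSqrtCoeff (n + 1)) := by
  have h := invSqrtCoeff_succ_mul n
  have hpos := invSqrtCoeff_pos (n + 1)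
  rw [div_le_iff₀ (by positivity)]
  nlinarith

lemma summable_invSqrtCoeff_succ_div :
    Summable fun n : ℕ => invSqrtCoeff (n + 1) / (n + 1) := by
  refine summable_of_sum_range_le (c := 2) (fun n => by positivity [invSqrtCoeff_pos (n + 1)])
    fun N => ?_
  calc ∑ n ∈ Finset.range N, invSqrtCoeff (n + 1) / (n + 1)
      ≤ ∑ n ∈ Finset.range N, 2 * (invSqrtCoeff n - invSqrtCoeff (n + 1)) :=
        Finset.sum_le_sum fun n _ => invSqrtCoeff_succ_div_le n
    _ = 2 * (1 - invSqrtCoeff N) := by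
        rw [← Finset.mul_sum, Finset.sum_range_sub', invSqrtCoeff_zero]
    _ ≤ 2 := by linarith [invSqrtCoeff_pos N]

lemma hasSum_invSqrtCoeff_mul_pow {x : ℝ} (hx : |x| < 1) :
    HasSum (fun n => invSqrtCoeff n * x ^ n) (1 / √(1 - x)) := by
  have h := (one_div_one_sub_rpow_hasFPowerSeriesOnBall_zero (1 / 2)).hasSum (y := x)
    (by simpa [enorm_eq_nnnorm, ← NNReal.coe_lt_coe] using hx)
  simp only [FormalMultilinearSeries.ofScalars_apply_eq, choose_add_sub_one_eq_poch_div_factorial,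
    smul_eq_mul, zero_add, ← sqrt_eq_rpow] at h
  simpa [invSqrtCoeff, mul_comm] using h

lemma tsum_invSqrtCoeff_succ_mul_pow {x : ℝ} (hx : |x| < 1) (hx0 : x ≠ 0) :
    ∑' n, invSqrtCoeff (n + 1) * x ^ n = 1 / (√(1 - x) * (1 + √(1 - x))) := by
  have hsum := hasSum_invSqrtCoeff_mul_pow hx
  have hshift : x * ∑' n, invSqrtCoeff (n + 1) * x ^ n = 1 / √(1 - x) - 1 := by
    rw [← tsum_mul_left, ← hsum.tsum_eq, hsum.summable.tsum_eq_zero_add, invSqrtCoeff_zero,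
      pow_zero, mul_one, add_sub_cancel_left]
    exact tsum_congr fun n => by ring
  set s := √(1 - x)
  have hs : 0 < s := sqrt_pos.2 (by linarith [le_abs_self x])
  have hx_eq : x = (1 - s) * (1 + s) := by
    linear_combination sq_sqrt (by linarith [le_abs_self x] : 0 ≤ 1 - x)
  have hs1 : 1 - s ≠ 0 := fun h => hx0 (by rw [hx_eq, h, zero_mul])
  rw [eq_div_iff (by positivity)]
  refine mul_left_cancel₀ hs1 ?_
  field_simp at hshift
  linear_combination hshift - s * (∑' n, invSqrtCoeff (n + 1) * x ^ n) * hx_eq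

lemma hasDerivAt_tsum_mul_pow_succ_div {c : ℕ → ℝ} (hc : ∀ n, |c n| ≤ 1) {x : ℝ}
    (hx : |x| < 1) :
    HasDerivAt (fun y => ∑' n, c n * y ^ (n + 1) / (n + 1)) (∑' n, c n * x ^ n) x := by
  obtain ⟨r, hxr, hr1⟩ : ∃ r, |x| < r ∧ r < 1 := ⟨(1 + |x|) / 2, by linarith, by linarith⟩
  have hbound : ∀ n, ∀ y ∈ Ioo (-r) r, ‖c n * y ^ n‖ ≤ r ^ n := fun n y hy => by
    rw [norm_mul, norm_pow, Real.norm_eq_abs, Real.norm_eq_abs]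
    exact (mul_le_of_le_one_left (by positivity) (hc n)).trans
      (pow_le_pow_left₀ (abs_nonneg y) (abs_lt.2 hy).le n)
  have hderiv : ∀ n, ∀ y ∈ Ioo (-r) r,
      HasDerivAt (fun y => c n * y ^ (n + 1) / (n + 1)) (c n * y ^ n) y := fun n y _ => by
    refine (((hasDerivAt_pow (n + 1) y).const_mul (c n)).div_const (n + 1 : ℝ)).congr_deriv ?_
    push_cast
    field_simp
  have hr0 : (0 : ℝ) ∈ Ioo (-r) r := abs_lt.1 (by simpa using (abs_nonneg x).trans_lt hxr)
  exact hasDerivAt_tsum_of_isPreconnected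
    (summable_geometric_of_lt_one (by linarith [abs_nonneg x]) hr1) isOpen_Ioo isPreconnected_Ioo
    hderiv hbound hr0 (by simp) (abs_lt.1 hxr)

lemma hasDerivAt_neg_two_mul_log_one_add_sqrt_one_sub_div_two {x : ℝ} (hx : x < 1) :
    HasDerivAt (fun y => -2 * log ((1 + √(1 - y)) / 2))
      (1 / (√(1 - x) * (1 + √(1 - x)))) x := by
  have hs : 0 < √(1 - x) := sqrt_pos.2 (by linarith)
  have hsqrt : HasDerivAt (fun y => √(1 - y)) (-1 / (2 * √(1 - x))) x := by
    simpa using ((hasDerivAt_id' x).const_sub 1).sqrt (by linarith)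
  refine (((hsqrt.const_add 1).div_const 2).log (by positivity)).const_mul (-2) |>.congr_deriv ?_
  field_simp

lemma norm_invSqrtCoeff_succ_mul_pow_succ_div_le {x : ℝ} (hx : |x| ≤ 1) (n : ℕ) :
    ‖invSqrtCoeff (n + 1) * x ^ (n + 1) / (n + 1)‖ ≤ invSqrtCoeff (n + 1) / (n + 1) := by
  rw [norm_div, norm_mul, norm_pow, Real.norm_eq_abs, Real.norm_eq_abs, Real.norm_eq_abs,
    abs_of_pos (invSqrtCoeff_pos _), abs_of_pos (by positivity : (0 : ℝ) < n + 1)]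
  gcongr
  exact mul_le_of_le_one_right (invSqrtCoeff_pos _).le (pow_le_one₀ (abs_nonneg x) hx)

lemma summable_invSqrtCoeff_succ_mul_pow_succ_div {x : ℝ} (hx : |x| ≤ 1) :
    Summable fun n : ℕ => invSqrtCoeff (n + 1) * x ^ (n + 1) / (n + 1) :=
  .of_norm_bounded summable_invSqrtCoeff_succ_div (norm_invSqrtCoeff_succ_mul_pow_succ_div_le hx)

lemma tsum_invSqrtCoeff_succ_mul_pow_succ_div {x : ℝ} (hx0 : 0 ≤ x) (hx1 : x ≤ 1) :
    ∑' n : ℕ, invSqrtCoeff (n + 1) * x ^ (n + 1) / (n + 1) =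
      -2 * log ((1 + √(1 - x)) / 2) := by
  set ψ : ℝ → ℝ := fun y => ∑' n : ℕ, invSqrtCoeff (n + 1) * y ^ (n + 1) / (n + 1) -
    -2 * log ((1 + √(1 - y)) / 2)
  have hcont : ContinuousOn ψ (Icc 0 1) := by
    refine .sub (continuousOn_tsum (fun n => by fun_prop) summable_invSqrtCoeff_succ_div
      fun n y hy => norm_invSqrtCoeff_succ_mul_pow_succ_div_le
        (abs_le.2 ⟨by linarith [hy.1], hy.2⟩) n) ?_
    refine ContinuousOn.mul continuousOn_const (ContinuousOn.log (by fun_prop) fun y _ => ?_)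
    positivity
  have hderiv : ∀ y ∈ Ioo (0 : ℝ) 1, HasDerivAt ψ 0 y := fun y ⟨hy0, hy1⟩ => by
    have hy : |y| < 1 := abs_lt.2 ⟨by linarith, hy1⟩
    have := (hasDerivAt_tsum_mul_pow_succ_div (fun n => abs_invSqrtCoeff_le_one (n + 1)) hy).sub
      (hasDerivAt_neg_two_mul_log_one_add_sqrt_one_sub_div_two hy1)
    rwa [tsum_invSqrtCoeff_succ_mul_pow hy hy0.ne', sub_self] at this
  suffices ψ x = 0 from sub_eq_zero.1 this
  rcases hx0.eq_or_lt with rfl | hx0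
  · simp [ψ]
  obtain ⟨y, -, hslope⟩ := exists_hasDerivAt_eq_slope ψ (fun _ => 0) hx0
    (hcont.mono (Icc_subset_Icc_right hx1))
    fun y hy => hderiv y ⟨hy.1, hy.2.trans_le hx1⟩
  have hψ0 : ψ 0 = 0 := by simp [ψ]
  rw [hψ0, sub_zero, sub_zero, eq_comm, div_eq_zero_iff] at hslope
  exact hslope.resolve_right hx0.ne'

lemma poch_three_halves_mul_pow_div {z : ℝ} (hz : z ≠ 0) (k : ℕ) :
    poch (3 / 2) k * z ^ k / ((k + 1 : ℝ) * ((k + 1)! : ℝ)) =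
      2 / z * (invSqrtCoeff (k + 1) * z ^ (k + 1) / (k + 1)) := by
  rw [invSqrtCoeff, poch_succ_left, show (1 / 2 : ℝ) + 1 = 3 / 2 by norm_num]
  field_simp
  ring

/-- `₃F₂(1,1,3/2;2,2;z) = -(4/z)·ln((1+√(1-z))/2)` for `0 < z ≤ 1`. -/
theorem threeF2_reduction (z : ℝ) (hz0 : 0 < z) (hz1 : z ≤ 1) :
    Summable (fun k : ℕ =>
      poch (3/2) k * z ^ k / ((k + 1 : ℝ) * (Nat.factorial (k + 1) : ℝ))) ∧
    ∑' k : ℕ, poch (3/2) k * z ^ k / ((k + 1 : ℝ) * (Nat.factorial (k + 1) : ℝ)) =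
      -(4 / z) * Real.log ((1 + Real.sqrt (1 - z)) / 2) := by
  simp_rw [poch_three_halves_mul_pow_div hz0.ne']
  have hz : |z| ≤ 1 := abs_le.2 ⟨by linarith, hz1⟩
  refine ⟨(summable_invSqrtCoeff_succ_mul_pow_succ_div hz).mul_left _, ?_⟩
  rw [tsum_mul_left, tsum_invSqrtCoeff_succ_mul_pow_succ_div hz0.le hz1]
  ring
end
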